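/- For every smooth function g : V → ℝ and every x ∈ Ω, F(x)·(−Δg(x) − (Xg)(x)) = −Δ(F·g)(x) + U(x)·F(x)·g(x). -/

import Mathlib

open MeasureTheory Real
open scoped RealInnerProductSpace BigOperators Classical

noncomputable section

namespace OPRS

variable {V : Type*} [NormedAddCommGroup V] [InnerProductSpace ℝ V] [FiniteDimensional ℝ V]

/-- The coroot `α∨ = 2α/(α,α)` of a nonzero vector `α`. -/
def coroot (α : V) : V := (2 / ⟪α, α⟫) • α

/-- The reflection `s_α(β) = β − (α∨,β)α` across the hyperplane orthogonal to `α`. -/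
def rootReflect (α β : V) : V := β - ⟪coroot α, β⟫ • α

/-- `R` is a root system: a finite spanning set not containing `0`, stable under the
reflections `s_α` for `α ∈ R`, with `(α∨,β) ∈ ℤ` for all `α, β ∈ R`. -/
structure IsRootSystem (R : Set V) : Prop where
  finite : R.Finite
  span_eq_top : Submodule.span ℝ R = ⊤
  zero_not_mem : (0 : V) ∉ R
  reflect_mem : ∀ α ∈ R, ∀ β ∈ R, rootReflect α β ∈ R
  integral : ∀ α ∈ R, ∀ β ∈ R, ∃ n : ℤ, ⟪coroot α, β⟫ = (n : ℝ)

/-- Irreducibility: `R` cannot be partitioned into two nonempty mutually orthogonal subsets. -/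
def IsIrreducibleRS (R : Set V) : Prop :=
  ¬ ∃ R₁ R₂ : Set V, R₁.Nonempty ∧ R₂.Nonempty ∧ R₁ ∪ R₂ = R ∧ R₁ ∩ R₂ = ∅ ∧
      ∀ α ∈ R₁, ∀ β ∈ R₂, ⟪α, β⟫ = 0

/-- `R` is reduced: the only roots proportional to a root `α` are `α` and `−α`. -/
def IsReducedRS (R : Set V) : Prop :=
  ∀ α ∈ R, ∀ t : ℝ, t • α ∈ R → t = 1 ∨ t = -1

/-- The Weyl group: the subgroup of the orthogonal group of `V` (realized as linear
isometric self-equivalences) generated by the reflections `s_α`, `α ∈ R`. -/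
def weylGroup (R : Set V) : Subgroup (V ≃ₗᵢ[ℝ] V) :=
  Subgroup.closure {w | ∃ α ∈ R, ∀ β, w β = rootReflect α β}

/-- The complement of the hyperplanes orthogonal to the roots. -/
def chamberComplement (R : Set V) : Set V := {x | ∀ α ∈ R, ⟪α, x⟫ ≠ 0}

/-- A Weyl chamber: a connected component of the complement of the root hyperplanes. -/
def IsWeylChamber (R C : Set V) : Prop :=
  ∃ x ∈ chamberComplement R, C = connectedComponentIn (chamberComplement R) x

/-- The positive roots `R⁺ = R ∩ closure C` relative to a Weyl chamber `C`. -/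
def posRoots (R C : Set V) : Set V := R ∩ closure C

/-- The simple roots: positive roots not expressible as a sum of two positive roots. -/
def simpleRoots (R C : Set V) : Set V :=
  {α ∈ posRoots R C | ¬ ∃ β ∈ posRoots R C, ∃ γ ∈ posRoots R C, α = β + γ}

/-- The root lattice `Q`: the ℤ-span of `R`. -/
def rootLattice (R : Set V) : AddSubgroup V := AddSubgroup.closure R

/-- The weight lattice `P = {λ : (α∨,λ) ∈ ℤ for all α ∈ R}`. -/
def weightLattice (R : Set V) : Set V :=
  {lam | ∀ α ∈ R, ∃ n : ℤ, ⟪coroot α, lam⟫ = (n : ℝ)}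

/-- The dominant weights `P⁺ = P ∩ closure C`. -/
def dominantWeights (R C : Set V) : Set V := weightLattice R ∩ closure C

/-- `μ ≤ λ` : `λ − μ` is a nonnegative-integer combination of positive roots. -/
def wtLE (R C : Set V) (μ lam : V) : Prop :=
  ∃ (s : Finset V) (f : V → ℕ), ↑s ⊆ posRoots R C ∧ lam - μ = ∑ α ∈ s, (f α : ℝ) • α

/-- `c` is a root length. -/
def IsRootLength (R : Set V) (c : ℝ) : Prop := 0 < c ∧ ∃ α ∈ R, ‖α‖ = c

/-- The set of all root lengths. -/
def rootLengths (R : Set V) : Set ℝ := {c | IsRootLength R c}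

/-- `R_c`, the roots of length `c`. -/
def rootsOfLen (R : Set V) (c : ℝ) : Set V := {α ∈ R | ‖α‖ = c}

/-- `R_c⁺`, the positive roots of length `c`. -/
def posRootsOfLen (R C : Set V) (c : ℝ) : Set V := {α ∈ posRoots R C | ‖α‖ = c}

/-- `ρ_c = (1/2) Σ_{α ∈ R_c⁺} α`. -/
def rhoOfLen (R C : Set V) (c : ℝ) : V := (2 : ℝ)⁻¹ • ∑ᶠ α ∈ posRootsOfLen R C c, α

/-- `A_c(x) = Π_{α ∈ R_c⁺} sin((α,x)/2)`. -/
def Afac (R C : Set V) (c : ℝ) (x : V) : ℝ :=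
  ∏ᶠ α ∈ posRootsOfLen R C c, Real.sin (⟪α, x⟫ / 2)

/-- `U_c(x) = (c²/4) Σ_{α ∈ R_c⁺} 1/sin²((α,x)/2)`. -/
def Upot (R C : Set V) (c : ℝ) (x : V) : ℝ :=
  c ^ 2 / 4 * ∑ᶠ α ∈ posRootsOfLen R C c, 1 / Real.sin (⟪α, x⟫ / 2) ^ 2

/-- The exponential function `e_λ(x) = exp(i(λ,x))`. -/
def eFun (lam : V) : V → ℂ := fun x => Complex.exp (Complex.I * (⟪lam, x⟫ : ℝ))

/-- `trig S`: the complex span of the `e_λ`, `λ ∈ S`. -/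
def trig (S : Set V) : Submodule ℂ (V → ℂ) := Submodule.span ℂ (eFun '' S)

/-- `trig(S)^W`: the `W`-invariant elements of `trig S`.  (The action of `w ∈ W` on
functions is `(w·φ)(x) = φ(w⁻¹ x)`, which on `e_λ` gives `w·e_λ = e_{w(λ)}`.) -/
def trigW (R : Set V) (S : Set V) : Set (V → ℂ) :=
  {φ | φ ∈ trig S ∧ ∀ w ∈ weylGroup R, ∀ x : V, φ (w⁻¹ x) = φ x}

/-- `P_λ = ∪_{w ∈ W} {w(μ) : μ ∈ P⁺, μ ≤ λ}`. -/
def Plam (R C : Set V) (lam : V) : Set V :=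
  {ν | ∃ w ∈ weylGroup R, ∃ μ ∈ dominantWeights R C, wtLE R C μ lam ∧ ν = w μ}

/-- The Euclidean Laplacian of a complex-valued function, via an orthonormal basis. -/
def lapC (f : V → ℂ) (x : V) : ℂ :=
  ∑ i, iteratedFDeriv ℝ 2 f x ![stdOrthonormalBasis ℝ V i, stdOrthonormalBasis ℝ V i]

/-- The Euclidean Laplacian of a real-valued function, via an orthonormal basis. -/
def lapR (f : V → ℝ) (x : V) : ℝ :=
  ∑ i, iteratedFDeriv ℝ 2 f x ![stdOrthonormalBasis ℝ V i, stdOrthonormalBasis ℝ V i]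

/-- `(∇f(x), ∇φ(x))` for real `f` and complex `φ`: the directional derivative of `φ`
along the gradient of `f`. -/
def gradPairC (f : V → ℝ) (φ : V → ℂ) (x : V) : ℂ := fderiv ℝ φ x (gradient f x)

/-- The coupling constants: `a_c = k_c(k_c + k_{2c} − 1)` if `c` is the length of a
multiplicable root (the short roots of a non-reduced system), `a_c = k_c(k_c − 1)`
otherwise (i.e. when `c` is the length of a non-multiplicable root). -/
def acoef (R : Set V) (k : ℝ → ℝ) (c : ℝ) : ℝ :=
  if ∃ α ∈ R, ‖α‖ = c ∧ (2 : ℝ) • α ∈ R then k c * (k c + k (2 * c) - 1)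
  else k c * (k c - 1)

/-- The gauge factor `F = Π_c |A_c|^{k_c}` (product over all root lengths). -/
def gaugeF (R C : Set V) (k : ℝ → ℝ) (x : V) : ℝ :=
  ∏ᶠ c ∈ rootLengths R, |Afac R C c x| ^ (k c)

/-- `ρ = Σ_c k_c ρ_c` (sum over all root lengths). -/
def rhoK (R C : Set V) (k : ℝ → ℝ) : V := ∑ᶠ c ∈ rootLengths R, k c • rhoOfLen R C c

/-- The Olshanetsky–Perelomov Hamiltonian `H = −Δ + Σ_c a_c U_c` acting on
(complex-valued) functions. -/
def opH (R C : Set V) (k : ℝ → ℝ) (f : V → ℂ) (x : V) : ℂ :=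
  - lapC f x + ((∑ᶠ c ∈ rootLengths R, acoef R k c * Upot R C c x : ℝ) : ℂ) * f x

/-- The complement of the affine hyperplanes `(α,x) ∈ 2πℤ`. -/
def alcoveComplement (R : Set V) : Set V :=
  {x | ∀ α ∈ R, ∀ n : ℤ, ⟪α, x⟫ ≠ 2 * Real.pi * n}

/-- `A` is the fundamental alcove: the connected component of the complement of the
affine hyperplanes that is contained in the chamber `C` and has `0` in its closure. -/
def IsAlcove (R C A : Set V) : Prop :=
  (∃ x ∈ alcoveComplement R, A = connectedComponentIn (alcoveComplement R) x) ∧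
    A ⊆ C ∧ (0 : V) ∈ closure A

lemma inner_gradient (f : V → ℝ) (x v : V) : ⟪gradient f x, v⟫ = fderiv ℝ f x v := by
  rw [gradient]
  simp [InnerProductSpace.toDual_apply_apply]

lemma lapR_eq (f : V → ℝ) (x : V) (hf : DifferentiableAt ℝ (fderiv ℝ f) x) :
    lapR f x = ∑ j, fderiv ℝ (fun y => fderiv ℝ f y (stdOrthonormalBasis ℝ V j)) x
      (stdOrthonormalBasis ℝ V j) := by
  unfold lapR
  refine Finset.sum_congr rfl fun j _ => ?_
  have h := fderiv_clm_apply (c := fderiv ℝ f) (u := fun _ => stdOrthonormalBasis ℝ V j)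
    hf (differentiableAt_const _)
  rw [iteratedFDeriv_two_apply, h]
  simp

lemma inner_grad_sum (u v : V → ℝ) (x : V) :
    ⟪gradient u x, gradient v x⟫ =
      ∑ j, fderiv ℝ u x (stdOrthonormalBasis ℝ V j) * fderiv ℝ v x (stdOrthonormalBasis ℝ V j) := by
  rw [← (stdOrthonormalBasis ℝ V).sum_inner_mul_inner]
  refine Finset.sum_congr rfl fun j _ => ?_
  rw [inner_gradient, real_inner_comm, inner_gradient]

lemma norm_grad_sum (u : V → ℝ) (x : V) :
    ‖gradient u x‖ ^ 2 =
      ∑ j, fderiv ℝ u x (stdOrthonormalBasis ℝ V j) * fderiv ℝ u x (stdOrthonormalBasis ℝ V j) := by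
  rw [← inner_grad_sum, real_inner_self_eq_norm_sq]

lemma lapR_congr {f₁ f : V → ℝ} {x : V} (h : f₁ =ᶠ[nhds x] f) : lapR f₁ x = lapR f x := by
  unfold lapR
  refine Finset.sum_congr rfl fun j _ => ?_
  have h2 : iteratedFDeriv ℝ 2 f₁ x = iteratedFDeriv ℝ 2 f x := by
    rw [← iteratedFDerivWithin_univ, ← iteratedFDerivWithin_univ]
    exact Filter.EventuallyEq.iteratedFDerivWithin_eq (h.filter_mono nhdsWithin_le_nhds)
      h.self_of_nhds 2
  rw [h2]

/-- the gauge-transformation identity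
`F·(−Δg − Xg) = −Δ(F·g) + U·F·g` at every point of `Ω = {x : ∀ i, f i x ≠ 0}`. -/
theorem gauge_transformation {n : ℕ} (f : Fin n → V → ℝ) (k : Fin n → ℝ)
    (hf : ∀ i, ContDiff ℝ (⊤ : ℕ∞) (f i)) (g : V → ℝ) (hg : ContDiff ℝ (⊤ : ℕ∞) g)
    (x : V) (hx : ∀ i, f i x ≠ 0) :
    (∏ i, |f i x| ^ (k i)) *
        (- lapR g x - ∑ i, 2 * k i * ⟪gradient (f i) x, gradient g x⟫ / f i x)
      = - lapR (fun y => (∏ i, |f i y| ^ (k i)) * g y) x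
        + (∑ i, k i * (k i - 1) * ‖gradient (f i) x‖ ^ 2 / f i x ^ 2
            + ∑ i, ∑ j, (if i = j then 0 else
                k i * k j * ⟪gradient (f i) x, gradient (f j) x⟫ / (f i x * f j x))
            + ∑ i, k i * lapR (f i) x / f i x)
          * ((∏ i, |f i x| ^ (k i)) * g x) := by

  classical
  set b := stdOrthonormalBasis ℝ V with hbdef
  -- the open set where all f i are nonzero
  set s : Set V := ⋂ i, (f i) ⁻¹' {0}ᶜ with hsdef
  have hs_open : IsOpen s :=
    isOpen_iInter_of_finite fun i => (isOpen_compl_singleton).preimage (hf i).continuous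
  have hxs : x ∈ s := Set.mem_iInter.2 fun i => hx i
  have hsn : s ∈ nhds x := hs_open.mem_nhds hxs
  have hne : ∀ y ∈ s, ∀ i, f i y ≠ 0 := fun y hy i => Set.mem_iInter.1 hy i
  -- basic differentiability
  have hfd : ∀ (i) (y : V), DifferentiableAt ℝ (f i) y :=
    fun i y => (hf i).contDiffAt.differentiableAt (by simp)
  have hgd : ∀ y : V, DifferentiableAt ℝ g y :=
    fun y => hg.contDiffAt.differentiableAt (by simp)
  have hDfd : ∀ (i) (e : V) (y : V), DifferentiableAt ℝ (fun z => fderiv ℝ (f i) z e) y :=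
    fun i e y => (((hf i).contDiffAt.fderiv_right (m := 1) (WithTop.coe_le_coe.2 le_top)).differentiableAt
      one_ne_zero).clm_apply (differentiableAt_const e)
  have hDgd : ∀ (e : V) (y : V), DifferentiableAt ℝ (fun z => fderiv ℝ g z e) y :=
    fun e y => ((hg.contDiffAt.fderiv_right (m := 1) (WithTop.coe_le_coe.2 le_top)).differentiableAt
      one_ne_zero).clm_apply (differentiableAt_const e)
  -- the logarithm  L
  set L : V → ℝ := fun y => ∑ i, k i * Real.log (f i y) with hLdef
  have hFeq : ∀ y ∈ s, (∏ i, |f i y| ^ (k i)) = Real.exp (L y) := by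
    intro y hy
    rw [hLdef, Real.exp_sum]
    refine Finset.prod_congr rfl fun i _ => ?_
    rw [Real.rpow_def_of_pos (abs_pos.2 (hne y hy i)), Real.log_abs, mul_comm]
  have hLsm : ∀ y ∈ s, ContDiffAt ℝ 2 L y := by
    intro y hy
    exact ContDiffAt.sum fun i _ =>
      (contDiffAt_const.mul (((hf i).contDiffAt.of_le (WithTop.coe_le_coe.2 (le_top : (2 : ℕ∞) ≤ ⊤))).log (hne y hy i)))
  -- first derivative of L
  have hL' : ∀ y ∈ s, HasFDerivAt L (∑ i, (k i * (f i y)⁻¹) • fderiv ℝ (f i) y) y := by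
    intro y hy
    refine HasFDerivAt.fun_sum fun i _ => ?_
    have h2 := (Real.hasDerivAt_log (hne y hy i)).comp_hasFDerivAt y (hfd i y).hasFDerivAt
    have h3 := h2.const_mul (k i)
    rw [smul_smul] at h3
    exact h3
  -- the smooth representative P
  set P : V → ℝ := fun y => Real.exp (L y) * g y with hPdef
  have hPg : (fun y => (∏ i, |f i y| ^ (k i)) * g y) =ᶠ[nhds x] P :=
    Filter.eventuallyEq_of_mem hsn fun y hy => by rw [hPdef]; simp only [hFeq y hy]
  have hP' : ∀ y ∈ s, HasFDerivAt P
      ((Real.exp (L y)) • fderiv ℝ g y +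
        g y • (Real.exp (L y) • (∑ i, (k i * (f i y)⁻¹) • fderiv ℝ (f i) y))) y := by
    intro y hy
    exact ((Real.hasDerivAt_exp (L y)).comp_hasFDerivAt y (hL' y hy)).mul (hgd y).hasFDerivAt
  -- first derivative of P applied to a direction, as an eventual equality
  have hDP : ∀ e : V, (fun y => fderiv ℝ P y e) =ᶠ[nhds x]
      (fun y => Real.exp (L y) *
        (fderiv ℝ g y e + g y * ∑ i, k i * (f i y)⁻¹ * fderiv ℝ (f i) y e)) := by
    intro e
    refine Filter.eventuallyEq_of_mem hsn fun y hy => ?_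
    rw [(hP' y hy).fderiv]
    simp only [ContinuousLinearMap.add_apply, ContinuousLinearMap.smul_apply,
      ContinuousLinearMap.sum_apply, smul_eq_mul, Finset.mul_sum]
    ring_nf
    rw [Finset.mul_sum]
    ring_nf
  -- second directional derivative of P
  have hsecond : ∀ e : V, fderiv ℝ (fun y => fderiv ℝ P y e) x e
      = Real.exp (L x) * (fderiv ℝ (fun y => fderiv ℝ g y e) x e
          + 2 * (∑ i, k i * (f i x)⁻¹ * fderiv ℝ (f i) x e) * fderiv ℝ g x e
          + g x * ((∑ i, k i * (f i x)⁻¹ * fderiv ℝ (f i) x e) *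
                   (∑ i, k i * (f i x)⁻¹ * fderiv ℝ (f i) x e))
          + g x * (∑ i, (k i * (f i x)⁻¹ * fderiv ℝ (fun y => fderiv ℝ (f i) y e) x e
                - k i * (f i x ^ 2)⁻¹ * (fderiv ℝ (f i) x e * fderiv ℝ (f i) x e)))) := by
    intro e
    have hSd : HasFDerivAt (fun y => ∑ i, k i * (f i y)⁻¹ * fderiv ℝ (f i) y e)
        (∑ i, ((k i * (f i x)⁻¹) • fderiv ℝ (fun y => fderiv ℝ (f i) y e) x
          + (fderiv ℝ (f i) x e) • (k i • ((-(f i x ^ 2)⁻¹) • fderiv ℝ (f i) x)))) x := by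
      refine HasFDerivAt.fun_sum fun i _ => ?_
      have hinv := (hasDerivAt_inv (hx i)).comp_hasFDerivAt x (hfd i x).hasFDerivAt
      have hu := hinv.const_mul (k i)
      have hv := (hDfd i e x).hasFDerivAt
      exact hu.mul hv
    have hq : HasFDerivAt
        (fun y => Real.exp (L y) *
          (fderiv ℝ g y e + g y * ∑ i, k i * (f i y)⁻¹ * fderiv ℝ (f i) y e))
        ((Real.exp (L x)) •
          (fderiv ℝ (fun y => fderiv ℝ g y e) x +
            (g x • (∑ i, ((k i * (f i x)⁻¹) • fderiv ℝ (fun y => fderiv ℝ (f i) y e) x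
              + (fderiv ℝ (f i) x e) • (k i • ((-(f i x ^ 2)⁻¹) • fderiv ℝ (f i) x))))
              + (∑ i, k i * (f i x)⁻¹ * fderiv ℝ (f i) x e) • fderiv ℝ g x))
          + (fderiv ℝ g x e + g x * ∑ i, k i * (f i x)⁻¹ * fderiv ℝ (f i) x e) •
              (Real.exp (L x) • (∑ i, (k i * (f i x)⁻¹) • fderiv ℝ (f i) x))) x := by
      exact ((Real.hasDerivAt_exp (L x)).comp_hasFDerivAt x (hL' x hxs)).mul
        (((hDgd e x).hasFDerivAt).add ((hgd x).hasFDerivAt.mul hSd))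
    rw [(hDP e).fderiv_eq, hq.fderiv]
    simp only [ContinuousLinearMap.add_apply, ContinuousLinearMap.smul_apply,
      ContinuousLinearMap.sum_apply, smul_eq_mul]
    simp only [Finset.sum_sub_distrib, Finset.sum_add_distrib, add_mul, mul_add,
      Finset.sum_mul, Finset.mul_sum, neg_mul, mul_neg, sub_eq_add_neg,
      Finset.sum_neg_distrib]
    ring_nf
    have c1 : (∑ i : Fin n, rexp (L x) * (fderiv ℝ g x) e * k i * (f i x)⁻¹ * (fderiv ℝ (f i) x) e * 2)
        = (∑ i : Fin n, rexp (L x) * k i * (f i x)⁻¹ * (fderiv ℝ (f i) x) e * (fderiv ℝ g x) e)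
          + ∑ i : Fin n, rexp (L x) * (fderiv ℝ g x) e * k i * (f i x)⁻¹ * (fderiv ℝ (f i) x) e := by
      rw [← Finset.sum_add_distrib]
      exact Finset.sum_congr rfl fun i _ => by ring
    have c2 : (∑ i : Fin n, ∑ j : Fin n,
          g x * k j * (f j x)⁻¹ * (fderiv ℝ (f j) x) e * rexp (L x) * k i * (f i x)⁻¹ * (fderiv ℝ (f i) x) e)
        = ∑ i : Fin n, ∑ j : Fin n,
          rexp (L x) * g x * k j * (f j x)⁻¹ * (fderiv ℝ (f j) x) e * k i * (f i x)⁻¹ * (fderiv ℝ (f i) x) e :=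
      Finset.sum_congr rfl fun i _ => Finset.sum_congr rfl fun j _ => by ring
    have c3 : (∑ i : Fin n, rexp (L x) * g x * (fderiv ℝ (f i) x) e ^ 2 * k i * (f i x)⁻¹ ^ 2)
        = ∑ i : Fin n, rexp (L x) * g x * k i * (f i x)⁻¹ ^ 2 * (fderiv ℝ (f i) x) e ^ 2 :=
      Finset.sum_congr rfl fun i _ => by ring
    linarith [c1, c2, c3]
  -- differentiability of the first derivatives, for lapR_eq
  have hgfd : DifferentiableAt ℝ (fderiv ℝ g) x :=
    (hg.contDiffAt.fderiv_right (m := 1) (WithTop.coe_le_coe.2 le_top)).differentiableAt one_ne_zero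
  have hffd : ∀ i, DifferentiableAt ℝ (fderiv ℝ (f i)) x := fun i =>
    ((hf i).contDiffAt.fderiv_right (m := 1) (WithTop.coe_le_coe.2 le_top)).differentiableAt one_ne_zero
  have hPsm : ContDiffAt ℝ 2 P x := ((hLsm x hxs).exp).mul (hg.contDiffAt.of_le (WithTop.coe_le_coe.2 (le_top : (2 : ℕ∞) ≤ ⊤)))
  have hPfd : DifferentiableAt ℝ (fderiv ℝ P) x :=
    (hPsm.fderiv_right (m := 1) (by norm_num)).differentiableAt one_ne_zero
  -- the value of the Laplacian of F·g
  have hlapP : lapR (fun y => (∏ i, |f i y| ^ (k i)) * g y) x = lapR P x := lapR_congr hPg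
  have hb1 : (∑ j, fderiv ℝ (fun y => fderiv ℝ g y (b j)) x (b j)) = lapR g x :=
    (lapR_eq g x hgfd).symm
  have hb2 : ∀ i, (∑ j, fderiv ℝ (fun y => fderiv ℝ (f i) y (b j)) x (b j)) = lapR (f i) x :=
    fun i => (lapR_eq (f i) x (hffd i)).symm
  have hsum : lapR P x = Real.exp (L x) * (lapR g x
      + 2 * (∑ i, k i * (f i x)⁻¹ * ⟪gradient (f i) x, gradient g x⟫)
      + g x * (∑ i, ∑ i', (k i * (f i x)⁻¹) * (k i' * (f i' x)⁻¹) *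
            ⟪gradient (f i) x, gradient (f i') x⟫)
      + g x * (∑ i, (k i * (f i x)⁻¹ * lapR (f i) x
            - k i * (f i x ^ 2)⁻¹ * ‖gradient (f i) x‖ ^ 2))) := by
    rw [lapR_eq P x hPfd]
    have := fun j => hsecond (b j)
    calc (∑ j, fderiv ℝ (fun y => fderiv ℝ P y (b j)) x (b j))
        = ∑ j, Real.exp (L x) * (fderiv ℝ (fun y => fderiv ℝ g y (b j)) x (b j)
          + 2 * (∑ i, k i * (f i x)⁻¹ * fderiv ℝ (f i) x (b j)) * fderiv ℝ g x (b j)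
          + g x * ((∑ i, k i * (f i x)⁻¹ * fderiv ℝ (f i) x (b j)) *
                   (∑ i, k i * (f i x)⁻¹ * fderiv ℝ (f i) x (b j)))
          + g x * (∑ i, (k i * (f i x)⁻¹ * fderiv ℝ (fun y => fderiv ℝ (f i) y (b j)) x (b j)
                - k i * (f i x ^ 2)⁻¹ * (fderiv ℝ (f i) x (b j) * fderiv ℝ (f i) x (b j))))) :=
          Finset.sum_congr rfl fun j _ => hsecond (b j)
      _ = Real.exp (L x) * (lapR g x
          + 2 * (∑ i, k i * (f i x)⁻¹ * ⟪gradient (f i) x, gradient g x⟫)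
          + g x * (∑ i, ∑ i', (k i * (f i x)⁻¹) * (k i' * (f i' x)⁻¹) *
                ⟪gradient (f i) x, gradient (f i') x⟫)
          + g x * (∑ i, (k i * (f i x)⁻¹ * lapR (f i) x
                - k i * (f i x ^ 2)⁻¹ * ‖gradient (f i) x‖ ^ 2))) := by
        rw [← Finset.mul_sum]
        congr 1
        have hB : (∑ j, (2 * ∑ i, k i * (f i x)⁻¹ * fderiv ℝ (f i) x (b j)) * fderiv ℝ g x (b j))
            = 2 * ∑ i, k i * (f i x)⁻¹ * ⟪gradient (f i) x, gradient g x⟫ := by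
          have : (∑ j, (2 * ∑ i, k i * (f i x)⁻¹ * fderiv ℝ (f i) x (b j)) * fderiv ℝ g x (b j))
              = ∑ i, 2 * (k i * (f i x)⁻¹ *
                  ∑ j, fderiv ℝ (f i) x (b j) * fderiv ℝ g x (b j)) := by
            calc (∑ j, (2 * ∑ i, k i * (f i x)⁻¹ * fderiv ℝ (f i) x (b j)) * fderiv ℝ g x (b j))
                = ∑ j, ∑ i, 2 * (k i * (f i x)⁻¹ *
                    (fderiv ℝ (f i) x (b j) * fderiv ℝ g x (b j))) := by
                  refine Finset.sum_congr rfl fun j _ => ?_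
                  rw [Finset.mul_sum, Finset.sum_mul]
                  refine Finset.sum_congr rfl fun i _ => by ring
              _ = ∑ i, ∑ j, 2 * (k i * (f i x)⁻¹ *
                    (fderiv ℝ (f i) x (b j) * fderiv ℝ g x (b j))) := Finset.sum_comm
              _ = ∑ i, 2 * (k i * (f i x)⁻¹ *
                    ∑ j, fderiv ℝ (f i) x (b j) * fderiv ℝ g x (b j)) := by
                  refine Finset.sum_congr rfl fun i _ => ?_
                  rw [← Finset.mul_sum, ← Finset.mul_sum]
          rw [this, Finset.mul_sum]
          refine Finset.sum_congr rfl fun i _ => ?_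
          rw [inner_grad_sum]
        have hC : (∑ j, g x * ((∑ i, k i * (f i x)⁻¹ * fderiv ℝ (f i) x (b j)) *
              (∑ i, k i * (f i x)⁻¹ * fderiv ℝ (f i) x (b j))))
            = g x * (∑ i, ∑ i', (k i * (f i x)⁻¹) * (k i' * (f i' x)⁻¹) *
                ⟪gradient (f i) x, gradient (f i') x⟫) := by
          rw [← Finset.mul_sum]
          congr 1
          calc (∑ j, (∑ i, k i * (f i x)⁻¹ * fderiv ℝ (f i) x (b j)) *
                  (∑ i, k i * (f i x)⁻¹ * fderiv ℝ (f i) x (b j)))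
              = ∑ j, ∑ i, ∑ i', (k i * (f i x)⁻¹) * (k i' * (f i' x)⁻¹) *
                  (fderiv ℝ (f i) x (b j) * fderiv ℝ (f i') x (b j)) := by
                refine Finset.sum_congr rfl fun j _ => ?_
                rw [Finset.sum_mul_sum]
                exact Finset.sum_congr rfl fun i _ =>
                  Finset.sum_congr rfl fun i' _ => by ring
            _ = ∑ i, ∑ i', (k i * (f i x)⁻¹) * (k i' * (f i' x)⁻¹) *
                  ⟪gradient (f i) x, gradient (f i') x⟫ := by
                rw [Finset.sum_comm]
                refine Finset.sum_congr rfl fun i _ => ?_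
                rw [Finset.sum_comm]
                refine Finset.sum_congr rfl fun i' _ => ?_
                rw [← Finset.mul_sum, inner_grad_sum]
        have hD : (∑ j, g x * (∑ i, (k i * (f i x)⁻¹ *
                fderiv ℝ (fun y => fderiv ℝ (f i) y (b j)) x (b j)
              - k i * (f i x ^ 2)⁻¹ * (fderiv ℝ (f i) x (b j) * fderiv ℝ (f i) x (b j)))))
            = g x * (∑ i, (k i * (f i x)⁻¹ * lapR (f i) x
              - k i * (f i x ^ 2)⁻¹ * ‖gradient (f i) x‖ ^ 2)) := by
          rw [← Finset.mul_sum]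
          congr 1
          rw [Finset.sum_comm]
          refine Finset.sum_congr rfl fun i _ => ?_
          rw [Finset.sum_sub_distrib, ← Finset.mul_sum, ← Finset.mul_sum, hb2 i,
            norm_grad_sum]
        rw [Finset.sum_add_distrib, Finset.sum_add_distrib, Finset.sum_add_distrib,
          hb1, hB, hC, hD]
  -- final algebra
  rw [hlapP, hsum, hFeq x hxs]
  have h1 : (∑ i, 2 * k i * ⟪gradient (f i) x, gradient g x⟫ / f i x)
      = 2 * ∑ i, k i * (f i x)⁻¹ * ⟪gradient (f i) x, gradient g x⟫ := by
    rw [Finset.mul_sum]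
    exact Finset.sum_congr rfl fun i _ => by ring
  have h2 : (∑ i, ∑ j, (if i = j then 0 else
        k i * k j * ⟪gradient (f i) x, gradient (f j) x⟫ / (f i x * f j x)))
      = (∑ i, ∑ i', (k i * (f i x)⁻¹) * (k i' * (f i' x)⁻¹) *
            ⟪gradient (f i) x, gradient (f i') x⟫)
        - ∑ i, k i * k i * ((f i x)⁻¹ * (f i x)⁻¹) * ‖gradient (f i) x‖ ^ 2 := by
    rw [← Finset.sum_sub_distrib]
    refine Finset.sum_congr rfl fun i _ => ?_
    have hd : (∑ j, (if i = j then 0 else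
          k i * k j * ⟪gradient (f i) x, gradient (f j) x⟫ / (f i x * f j x)))
        = (∑ j, k i * k j * ⟪gradient (f i) x, gradient (f j) x⟫ / (f i x * f j x))
          - k i * k i * ⟪gradient (f i) x, gradient (f i) x⟫ / (f i x * f i x) := by
      have hterm : ∀ j : Fin n, (if i = j then (0:ℝ) else
            k i * k j * ⟪gradient (f i) x, gradient (f j) x⟫ / (f i x * f j x))
          = k i * k j * ⟪gradient (f i) x, gradient (f j) x⟫ / (f i x * f j x)
            - (if i = j then k i * k j * ⟪gradient (f i) x, gradient (f j) x⟫ / (f i x * f j x)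
               else 0) := by
        intro j
        by_cases h : i = j <;> simp [h]
      simp only [hterm]
      rw [Finset.sum_sub_distrib, Finset.sum_ite_eq Finset.univ i (fun j =>
        k i * k j * ⟪gradient (f i) x, gradient (f j) x⟫ / (f i x * f j x))]
      simp
    rw [hd, real_inner_self_eq_norm_sq]
    congr 1
    · exact Finset.sum_congr rfl fun j _ => by ring
    · ring
  have h3 : (∑ i, k i * (k i - 1) * ‖gradient (f i) x‖ ^ 2 / f i x ^ 2)
        + (∑ i, k i * lapR (f i) x / f i x)
      = (∑ i, k i * k i * ((f i x)⁻¹ * (f i x)⁻¹) * ‖gradient (f i) x‖ ^ 2)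
        + ∑ i, (k i * (f i x)⁻¹ * lapR (f i) x
            - k i * (f i x ^ 2)⁻¹ * ‖gradient (f i) x‖ ^ 2) := by
    rw [← Finset.sum_add_distrib, ← Finset.sum_add_distrib]
    refine Finset.sum_congr rfl fun i _ => ?_
    have : (f i x)⁻¹ * (f i x)⁻¹ = (f i x ^ 2)⁻¹ := by
      rw [sq, mul_inv]
    rw [this]
    ring
  linear_combination (-(Real.exp (L x))) * h1 - (Real.exp (L x) * g x) * h2
    - (Real.exp (L x) * g x) * h3


end OPRS
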